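/- arXiv:2009.02377 — 4 statements merged into one kernel-verified Lean document; each statement's English description precedes it below -/
import Mathlib

section
/- Let G = (V, E) be a finite graph with incidence matrix D ∈ {-1,0,1}^{|V|×|E|} (for an arbitrary orientation), admittance matrix B = D Γ D^T where Γ is the diagonal matrix of link weights 1/r_e > 0, and let F ⊆ E_H be a set of links inside the attacked area H. Let B' be B with the contributions of links in F removed, and suppose Bθ = p and B'θ' = p - Δ. Then there exists a vector x ∈ ℝ^{|E_H|} with supp(x) = {e ∈ F : θ'_s ≠ θ'_t for e = (s,t)} ⊆ F such that D_H x = B_{H|G}(θ - θ') - Δ_H, where D_H is the incidence matrix of the subgraph H. In particular, defining x_e = b_{st}(θ'_s - θ'_t) for e = (s,t) ∈ F and x_e = 0 otherwise, this x satisfies the equation. -/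
/-!
Subtracting the two power-flow equations gives `B (θ - θ') - Δ = (B' - B) θ'`. Since `B' - B`
only drops the weights of the failed links, `(B' - B) θ' = D y` where `y e = -Γ e (θ'_s - θ'_t)`
on `F` and `0` elsewhere. As `F ⊆ E_H`, only the columns of `D` indexed by `E_H` see `y`.
-/

open Matrix

lemma incidence_transpose_mulVec_apply {R V E : Type*} [Ring R] [Fintype V] [DecidableEq V]
    (ends : E → V × V) (D : Matrix V E R)
    (hD : ∀ v e, D v e = if v = (ends e).1 then 1 else if v = (ends e).2 then -1 else 0)
    (θ : V → R) {e : E} (he : (ends e).1 ≠ (ends e).2) :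
    (Dᵀ *ᵥ θ) e = θ (ends e).1 - θ (ends e).2 := by
  have hcol : Dᵀ e = Pi.single (ends e).1 1 - Pi.single (ends e).2 1 := by
    funext v
    rw [transpose_apply, hD]
    by_cases h1 : v = (ends e).1
    · subst h1; simp [he]
    · by_cases h2 : v = (ends e).2
      · subst h2; simp [h1]
      · simp [h1, h2]
  rw [mulVec, hcol, sub_dotProduct, single_one_dotProduct, single_one_dotProduct]

lemma mul_diagonal_mul_mulVec {R m n o : Type*} [Semiring R] [Fintype n] [DecidableEq n]
    [Fintype o] (A : Matrix m n R) (d : n → R) (C : Matrix n o R) (v : o → R) :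
    (A * diagonal d * C) *ᵥ v = A *ᵥ (d * (C *ᵥ v)) := by
  rw [← mulVec_mulVec, ← mulVec_mulVec]
  congr 1
  funext i
  exact mulVec_diagonal d (C *ᵥ v) i

lemma mulVec_eq_submatrix_mulVec {R m n : Type*} [NonUnitalNonAssocSemiring R] [Fintype n]
    (M : Matrix m n R) (S : Set n) [DecidablePred (· ∈ S)] {y : n → R}
    (hy : ∀ j ∉ S, y j = 0) :
    M *ᵥ y = M.submatrix id ((↑) : S → n) *ᵥ fun j => y j := by
  funext i
  simp only [mulVec, dotProduct, submatrix_apply, id]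
  rw [← Fintype.sum_subtype_add_sum_subtype (· ∈ S),
    Fintype.sum_eq_zero (fun j : {j // j ∉ S} => M i j * y j) (fun j => by simp [hy j j.2]),
    add_zero]

lemma incidence_mul_diagonal_erase_sub_mulVec {R V E : Type*} [Ring R] [Fintype V] [DecidableEq V]
    [Fintype E] [DecidableEq E] (ends : E → V × V) (D : Matrix V E R)
    (hD : ∀ v e, D v e = if v = (ends e).1 then 1 else if v = (ends e).2 then -1 else 0)
    (F : Finset E) (hF : ∀ e ∈ F, (ends e).1 ≠ (ends e).2) (Γ : E → R) (θ : V → R) :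
    (D * diagonal (fun e => if e ∈ F then 0 else Γ e) * Dᵀ) *ᵥ θ
        - (D * diagonal Γ * Dᵀ) *ᵥ θ =
      D *ᵥ fun e => if e ∈ F then -Γ e * (θ (ends e).1 - θ (ends e).2) else 0 := by
  rw [mul_diagonal_mul_mulVec, mul_diagonal_mul_mulVec, ← mulVec_sub]
  congr 1
  funext e
  by_cases he : e ∈ F
  · simp [he, incidence_transpose_mulVec_apply ends D hD θ (hF e he)]
  · simp [he]

theorem stmt2_general {V E : Type*} [Fintype V] [DecidableEq V] [Fintype E] [DecidableEq E]
    (ends : E → V × V)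
    (VH : Set V)
    (EH : Set E) [DecidablePred (· ∈ EH)]
    (F : Finset E) (hFH : ∀ e ∈ F, e ∈ EH)
    (Γ : E → ℝ) (hΓ : ∀ e, 0 < Γ e)
    (D : Matrix V E ℝ)
    (hD : ∀ v e, D v e =
      if v = (ends e).1 then 1 else if v = (ends e).2 then -1 else 0)
    (B B' : Matrix V V ℝ)
    (hB : B = D * Matrix.diagonal Γ * Dᵀ)
    (hB' : B' = D * Matrix.diagonal (fun e => if e ∈ F then 0 else Γ e) * Dᵀ)
    (θ θ' p Δ : V → ℝ)
    (h1 : B *ᵥ θ = p) (h2 : B' *ᵥ θ' = p - Δ)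
    (hnd : ∀ e ∈ F, θ' (ends e).1 ≠ θ' (ends e).2) :
    ∃ x : {e // e ∈ EH} → ℝ,
      (∀ e, x e ≠ 0 ↔ e.1 ∈ F) ∧
      (∀ e, x e = if e.1 ∈ F then
        -Γ e.1 * (θ' (ends e.1).1 - θ' (ends e.1).2) else 0) ∧
      (Matrix.of (fun (v : {v // v ∈ VH}) (e : {e // e ∈ EH}) => D v.1 e.1)) *ᵥ x
        = fun v => (B *ᵥ (θ - θ')) v.1 - Δ v.1 := by
  set y : E → ℝ := fun e => if e ∈ F then -Γ e * (θ' (ends e).1 - θ' (ends e).2) else 0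
  refine ⟨fun e => y e, fun e => ?_, fun e => rfl, ?_⟩
  · by_cases he : e.1 ∈ F
    · simp [y, he, (hΓ e.1).ne', sub_eq_zero, hnd e.1 he]
    · simp [y, he]
  · have hflow : D *ᵥ y = B *ᵥ (θ - θ') - Δ := by
      rw [← incidence_mul_diagonal_erase_sub_mulVec ends D hD F
        (fun e he h => hnd e he (congrArg θ' h)), ← hB, ← hB', mulVec_sub, h1, h2]
      abel
    have hy : ∀ e ∉ EH, y e = 0 := fun e he => if_neg fun hF => he (hFH e hF)
    funext v
    exact (congrFun (mulVec_eq_submatrix_mulVec D EH hy) v.1).symm.trans (congrFun hflow v.1)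

theorem stmt2 {V E : Type*} [Fintype V] [DecidableEq V] [Fintype E] [DecidableEq E]
    (ends : E → V × V) (hends : ∀ e, (ends e).1 ≠ (ends e).2)
    (VH : Set V) [DecidablePred (· ∈ VH)]
    (EH : Set E) [DecidablePred (· ∈ EH)]
    (hind : ∀ e ∈ EH, (ends e).1 ∈ VH ∧ (ends e).2 ∈ VH)
    (F : Finset E) (hFH : ∀ e ∈ F, e ∈ EH)
    (Γ : E → ℝ) (hΓ : ∀ e, 0 < Γ e)
    (D : Matrix V E ℝ)
    (hD : ∀ v e, D v e =
      if v = (ends e).1 then 1 else if v = (ends e).2 then -1 else 0)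
    (B B' : Matrix V V ℝ)
    (hB : B = D * Matrix.diagonal Γ * Dᵀ)
    (hB' : B' = D * Matrix.diagonal (fun e => if e ∈ F then 0 else Γ e) * Dᵀ)
    (θ θ' p Δ : V → ℝ)
    (h1 : B *ᵥ θ = p) (h2 : B' *ᵥ θ' = p - Δ)
    (hnd : ∀ e ∈ F, θ' (ends e).1 ≠ θ' (ends e).2) :
    ∃ x : {e // e ∈ EH} → ℝ,
      (∀ e, x e ≠ 0 ↔ e.1 ∈ F) ∧
      (∀ e, x e = if e.1 ∈ F then
        -Γ e.1 * (θ' (ends e.1).1 - θ' (ends e.1).2) else 0) ∧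
      (Matrix.of (fun (v : {v // v ∈ VH}) (e : {e // e ∈ EH}) => D v.1 e.1)) *ᵥ x
        = fun v => (B *ᵥ (θ - θ')) v.1 - Δ v.1 :=
  stmt2_general ends VH EH F hFH Γ hΓ D hD B B' hB hB' θ θ' p Δ h1 h2 hnd
end

section
/- (No-miss condition via a hyper-node) Let U ⊆ V_H be a hyper-node with boundary edge set E_U, and let l ∈ E_U ∩ F be a failed link. Define D̃_{U,e} := Σ_{u∈U} D̃_{u,e}. Suppose (1) D̃_{U,e} D̃_{U,l} > 0 for all e, l ∈ E_U ∩ F, (2) S_U = ∅, i.e., there is no operational boundary edge e with D̃_{U,e} of the same sign as the failed boundary edges, and (3) f_{U,g} + (η-1)|D̃_{U,l}| < 0, where f_{U,g} = Σ_{u∈U} g_{D,u} if D̃_{U,l} < 0 and Σ_{u∈U} g_{D,-u} otherwise. Then there exists z ≥ 0 satisfying the alternative system [A_D^T, A_x^T, W^T, 1] z = 0 and [g_D^T, g_x^T, g_w^T, 0] z < 0 for Q_m = {l}, Q_f = ∅; consequently l is detected by the LP-based algorithm. -/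
open Matrix Finset

/-! The witness of the paper: `z_D` is the indicator of `U` on the `+` or `-` side according to
the sign of `D̃_{U,l}`, so the `A_D` block contributes `σ D̃_{U,e}` to row `e`, with `σ = ±1`.
Off the boundary `E_U` this vanishes because `D̃` is antisymmetric along an edge; on `E_U` it is
cancelled by `z_{x+}` (failed edges) or `z_{x-}` (operational ones), which are nonnegative by
conditions (1) and (2); on `l` it is cancelled by `z_w = |D̃_{U,l}|`. Since `z_{x+}` lives on `F`
and `z_{x-}` off `F`, the objective reduces to `f_{U,g} + (η - 1)|D̃_{U,l}|`, negative by (3). -/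

def EUb {V E : Type*} [Fintype E] [DecidableEq V] (ends : E → V × V) (U : Finset V) :
    Finset E :=
  Finset.univ.filter (fun e =>
    ((ends e).1 ∈ U ∧ (ends e).2 ∉ U) ∨ ((ends e).2 ∈ U ∧ (ends e).1 ∉ U))

noncomputable def dtU {V E : Type*} (Dt : Matrix V E ℝ) (U : Finset V) (e : E) : ℝ :=
  ∑ u ∈ U, Dt u e

section Boundary

variable {V E : Type*} [DecidableEq V] (ends : E → V × V) (Dt : Matrix V E ℝ)

lemma sum_ends_eq_zero (hskew : ∀ e, Dt (ends e).1 e = - Dt (ends e).2 e) (e : E) :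
    ∑ u ∈ {(ends e).1, (ends e).2}, Dt u e = 0 := by
  by_cases h : (ends e).1 = (ends e).2
  · have := hskew e
    rw [h] at this ⊢
    rw [insert_eq_of_mem (mem_singleton_self _), sum_singleton]
    linarith
  · rw [sum_pair h, hskew e, neg_add_cancel]

lemma dtU_eq_sum_inter_ends (hD0 : ∀ u e, u ≠ (ends e).1 → u ≠ (ends e).2 → Dt u e = 0)
    (U : Finset V) (e : E) :
    dtU Dt U e = ∑ u ∈ U ∩ {(ends e).1, (ends e).2}, Dt u e := by
  refine (sum_subset inter_subset_left fun u hu hu' => hD0 u e ?_ ?_).symm <;>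
  · rintro rfl
    simp_all

lemma dtU_eq_zero_of_notMem_EUb [Fintype E]
    (hD0 : ∀ u e, u ≠ (ends e).1 → u ≠ (ends e).2 → Dt u e = 0)
    (hskew : ∀ e, Dt (ends e).1 e = - Dt (ends e).2 e) {U : Finset V} {e : E}
    (he : e ∉ EUb ends U) :
    dtU Dt U e = 0 := by
  simp only [EUb, mem_filter, mem_univ, true_and, not_or, not_and_or,
    not_not] at he
  rw [dtU_eq_sum_inter_ends ends Dt hD0]
  by_cases h1 : (ends e).1 ∈ U
  · have h2 : (ends e).2 ∈ U := by tauto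
    rw [inter_eq_right.2 (insert_subset h1 (singleton_subset_iff.2 h2))]
    exact sum_ends_eq_zero ends Dt hskew e
  · have h2 : (ends e).2 ∉ U := by tauto
    rw [inter_comm, insert_inter_of_notMem h1,
      singleton_inter_of_notMem h2, sum_empty]

end Boundary

noncomputable def flowSign (a : ℝ) : ℝ := if a < 0 then 1 else -1

lemma flowSign_mul_self (a : ℝ) : flowSign a * a = -|a| := by
  unfold flowSign
  split_ifs with h
  · rw [abs_of_neg h]; ring
  · rw [abs_of_nonneg (not_lt.1 h)]; ring

lemma flowSign_mul_nonpos_of_mul_pos {a b : ℝ} (h : 0 < a * b) : flowSign a * b ≤ 0 := by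
  unfold flowSign
  split_ifs with ha
  · nlinarith
  · nlinarith

lemma flowSign_mul_nonneg_of_not_mul_pos {a b : ℝ} (ha : a ≠ 0) (h : ¬ 0 < a * b) :
    0 ≤ flowSign a * b := by
  unfold flowSign
  split_ifs with ha'
  · nlinarith
  · have : 0 < a := lt_of_le_of_ne (not_lt.1 ha') (Ne.symm ha)
    nlinarith

section Indicator

variable {V E : Type*} [Fintype V] [DecidableEq V] (U : Finset V)

lemma sum_mul_indicator_sub (Dt : Matrix V E ℝ) (e : E) (a : ℝ) :
    ∑ u, Dt u e * ((if u ∈ U ∧ a < 0 then 1 else 0) - (if u ∈ U ∧ ¬ a < 0 then 1 else 0)) =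
      flowSign a * dtU Dt U e := by
  unfold flowSign
  by_cases ha : a < 0 <;> simp [ha, dtU, mul_sum, sum_ite_mem]

lemma sum_mul_indicator_add (p : Prop) [Decidable p] (g g' : V → ℝ) :
    ∑ u, (g u * (if u ∈ U ∧ p then 1 else 0) + g' u * (if u ∈ U ∧ ¬ p then 1 else 0)) =
      if p then ∑ u ∈ U, g u else ∑ u ∈ U, g' u := by
  by_cases hp : p <;> simp [hp, sum_ite_mem]

end Indicator

theorem stmt10_general {V E : Type*} [Fintype V] [DecidableEq V] [Fintype E] [DecidableEq E]
    (ends : E → V × V) (Dt : Matrix V E ℝ)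
    (hD0 : ∀ u e, u ≠ (ends e).1 → u ≠ (ends e).2 → Dt u e = 0)
    (hskew : ∀ e, Dt (ends e).1 e = - Dt (ends e).2 e)
    (F : Finset E) (gD gDm : V → ℝ) (η : ℝ)
    (U : Finset V) (l : E) (hlU : l ∈ EUb ends U) (hlF : l ∈ F)
    (hcond1 : ∀ e ∈ EUb ends U ∩ F, ∀ l' ∈ EUb ends U ∩ F,
      dtU Dt U e * dtU Dt U l' > 0)
    (hcond2 : ∀ e ∈ EUb ends U, e ∉ F → ∀ l' ∈ EUb ends U ∩ F,
      ¬ (dtU Dt U l' * dtU Dt U e > 0))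
    (hcond3 : (if dtU Dt U l < 0 then ∑ u ∈ U, gD u else ∑ u ∈ U, gDm u)
        + (η - 1) * |dtU Dt U l| < 0) :
    ∃ (zD zDm : V → ℝ) (zxm zxp : E → ℝ) (zw zs : ℝ),
      (∀ u, 0 ≤ zD u) ∧ (∀ u, 0 ≤ zDm u) ∧ (∀ e, 0 ≤ zxm e) ∧ (∀ e, 0 ≤ zxp e) ∧
      0 ≤ zw ∧ 0 ≤ zs ∧
      (∀ e, (∑ u, Dt u e * (zD u - zDm u)) + (zxp e - zxm e)
          + (if e = l then zw else 0) + zs = 0) ∧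
      ((∑ u, (gD u * zD u + gDm u * zDm u))
        + (∑ e, (zxp e * (1 - (if e ∈ F then (1 : ℝ) else 0))
            + zxm e * (if e ∈ F then (1 : ℝ) else 0)))
        + (η - 1) * zw < 0) := by
  have hlEF : l ∈ EUb ends U ∩ F := mem_inter.2 ⟨hlU, hlF⟩
  have hl0 : dtU Dt U l ≠ 0 := fun h => by simpa [h] using hcond1 l hlEF l hlEF
  set d := dtU Dt U l
  refine ⟨fun u => if u ∈ U ∧ d < 0 then 1 else 0, fun u => if u ∈ U ∧ ¬ d < 0 then 1 else 0,
    fun e => if e ∈ EUb ends U ∧ e ∉ F then flowSign d * dtU Dt U e else 0,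
    fun e => if e ∈ EUb ends U ∧ e ∈ F ∧ e ≠ l then -(flowSign d * dtU Dt U e) else 0,
    |d|, 0, fun _ => by positivity, fun _ => by positivity, fun e => ?_, fun e => ?_,
    abs_nonneg d, le_rfl, fun e => ?_, ?_⟩
  · dsimp only
    split_ifs with he
    · exact flowSign_mul_nonneg_of_not_mul_pos hl0 (hcond2 e he.1 he.2 l hlEF)
    · exact le_rfl
  · dsimp only
    split_ifs with he
    · refine neg_nonneg.2 (flowSign_mul_nonpos_of_mul_pos ?_)
      rw [mul_comm]
      exact hcond1 e (mem_inter.2 ⟨he.1, he.2.1⟩) l hlEF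
    · exact le_rfl
  · rw [sum_mul_indicator_sub]
    by_cases hel : e = l
    · subst hel
      simp [hlF]
      rw [show dtU Dt U e = d from rfl, flowSign_mul_self, neg_add_cancel]
    · by_cases heU : e ∈ EUb ends U
      · by_cases heF : e ∈ F <;> simp [hel, heU, heF]
      · simp [hel, heU, dtU_eq_zero_of_notMem_EUb ends Dt hD0 hskew heU]
  · have hx : ∑ e, ((if e ∈ EUb ends U ∧ e ∈ F ∧ e ≠ l then -(flowSign d * dtU Dt U e) else 0)
          * (1 - (if e ∈ F then (1 : ℝ) else 0))
        + (if e ∈ EUb ends U ∧ e ∉ F then flowSign d * dtU Dt U e else 0)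
          * (if e ∈ F then (1 : ℝ) else 0)) = 0 :=
      sum_eq_zero fun e _ => by by_cases heF : e ∈ F <;> simp [heF]
    rw [sum_mul_indicator_add, hx]
    linarith

/-- No-miss condition via a hyper-node: under conditions (1)-(3) there is a nonnegative
solution of the alternative system for `Q_m = {l}`, `Q_f = ∅`. -/
theorem stmt10 {V E : Type*} [Fintype V] [DecidableEq V] [Fintype E] [DecidableEq E]
    (ends : E → V × V) (Dt : Matrix V E ℝ)
    (hD0 : ∀ u e, u ≠ (ends e).1 → u ≠ (ends e).2 → Dt u e = 0)
    (hskew : ∀ e, Dt (ends e).1 e = - Dt (ends e).2 e)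
    (F : Finset E) (gD gDm : V → ℝ) (η : ℝ) (hη : 0 < η ∧ η < 1)
    (U : Finset V) (l : E) (hlU : l ∈ EUb ends U) (hlF : l ∈ F)
    (hcond1 : ∀ e ∈ EUb ends U ∩ F, ∀ l' ∈ EUb ends U ∩ F,
      dtU Dt U e * dtU Dt U l' > 0)
    (hcond2 : ∀ e ∈ EUb ends U, e ∉ F → ∀ l' ∈ EUb ends U ∩ F,
      ¬ (dtU Dt U l' * dtU Dt U e > 0))
    (hcond3 : (if dtU Dt U l < 0 then ∑ u ∈ U, gD u else ∑ u ∈ U, gDm u)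
        + (η - 1) * |dtU Dt U l| < 0) :
    ∃ (zD zDm : V → ℝ) (zxm zxp : E → ℝ) (zw zs : ℝ),
      (∀ u, 0 ≤ zD u) ∧ (∀ u, 0 ≤ zDm u) ∧ (∀ e, 0 ≤ zxm e) ∧ (∀ e, 0 ≤ zxp e) ∧
      0 ≤ zw ∧ 0 ≤ zs ∧
      (∀ e, (∑ u, Dt u e * (zD u - zDm u)) + (zxp e - zxm e)
          + (if e = l then zw else 0) + zs = 0) ∧
      ((∑ u, (gD u * zD u + gDm u * zDm u))
        + (∑ e, (zxp e * (1 - (if e ∈ F then (1 : ℝ) else 0))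
            + zxm e * (if e ∈ F then (1 : ℝ) else 0)))
        + (η - 1) * zw < 0) :=
  stmt10_general ends Dt hD0 hskew F gD gDm η U l hlU hlF hcond1 hcond2 hcond3
end

section
/- (Fail-cover set no-miss condition) Let T be a set of fail-cover hyper-nodes partitioned into T_n (with D̃_{U,e} ≤ 0 for all e ∈ F) and T_p (with D̃_{U,e} ≥ 0 for all e ∈ F), define R_{U_i} = max_{U∈T} f_{U,1} / f_{U_i,1}, D̃_{T,e} = Σ_{U∈T_n} R_U D̃_{U,e} - Σ_{U∈T_p} R_U D̃_{U,e}, S_T = {e' ∉ F : D̃_{T,e'} D̃_{T,e} > 0 for some e ∈ F}, f_{T,0} = max_{e'∈S_T} |D̃_{T,e'}|, f_{T,1} = min_{e∈F} |D̃_{T,e}|, f_{T,g} = Σ_{U∈T} R_U f_{U,g}. Assume (i) f_{T,1} ≥ f_{T,0} and (ii) every failed link is a boundary edge of some hyper-node in T. Then for any failed link e ∈ F with f_{T,g} + (η-1)(|D̃_{T,e}| - f_{T,0}) < 0, there exists z ≥ 0 solving the alternative system for Q_m = {e}, Q_f = ∅ (with the free scalar z_* = f_{T,0}); hence e is detected by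 the LP-based algorithm. -/
open Matrix Finset

/-- `f_{U,1} = min_{e ∈ E_U ∩ F} |D̃_{U,e}|`. -/
noncomputable def fU1 {V E : Type*} [Fintype E] [DecidableEq V] [DecidableEq E]
    (ends : E → V × V) (Dt : Matrix V E ℝ) (F : Finset E) (U : Finset V) : ℝ :=
  sInf ((fun e => |dtU Dt U e|) '' ↑(EUb ends U ∩ F))

/-- `R_U = (max_{U' ∈ T} f_{U',1}) / f_{U,1}`. -/
noncomputable def RT {V E : Type*} [Fintype E] [DecidableEq V] [DecidableEq E]
    (ends : E → V × V) (Dt : Matrix V E ℝ) (F : Finset E)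
    (Tn Tp : Finset (Finset V)) (U : Finset V) : ℝ :=
  sSup ((fun U' => fU1 ends Dt F U') '' ↑(Tn ∪ Tp)) / fU1 ends Dt F U

/-- `D̃_{T,e} = ∑_{U ∈ T_n} R_U D̃_{U,e} - ∑_{U ∈ T_p} R_U D̃_{U,e}`. -/
noncomputable def dtT {V E : Type*} [Fintype E] [DecidableEq V] [DecidableEq E]
    (ends : E → V × V) (Dt : Matrix V E ℝ) (F : Finset E)
    (Tn Tp : Finset (Finset V)) (e : E) : ℝ :=
  ∑ U ∈ Tn, RT ends Dt F Tn Tp U * dtU Dt U e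
    - ∑ U ∈ Tp, RT ends Dt F Tn Tp U * dtU Dt U e

/-- `S_T = {e' ∉ F : ∃ e ∈ F, D̃_{T,e'} D̃_{T,e} > 0}`. -/
def STset {V E : Type*} [Fintype E] [DecidableEq V] [DecidableEq E]
    (ends : E → V × V) (Dt : Matrix V E ℝ) (F : Finset E)
    (Tn Tp : Finset (Finset V)) : Set E :=
  {e' | e' ∉ F ∧ ∃ e ∈ F, dtT ends Dt F Tn Tp e' * dtT ends Dt F Tn Tp e > 0}

/-- `f_{T,0} = max_{e' ∈ S_T} |D̃_{T,e'}|` (equal to `0` if `S_T = ∅`). -/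
noncomputable def fT0 {V E : Type*} [Fintype E] [DecidableEq V] [DecidableEq E]
    (ends : E → V × V) (Dt : Matrix V E ℝ) (F : Finset E)
    (Tn Tp : Finset (Finset V)) : ℝ :=
  sSup ((fun e' => |dtT ends Dt F Tn Tp e'|) '' STset ends Dt F Tn Tp)

/-- `f_{T,1} = min_{e ∈ F} |D̃_{T,e}|`. -/
noncomputable def fT1 {V E : Type*} [Fintype E] [DecidableEq V] [DecidableEq E]
    (ends : E → V × V) (Dt : Matrix V E ℝ) (F : Finset E)
    (Tn Tp : Finset (Finset V)) : ℝ :=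
  sInf ((fun e => |dtT ends Dt F Tn Tp e|) '' ↑F)

/-- `f_{U,g}`: sum of `g_{D,u}` over `U` if some failed boundary edge has
`D̃_{U,l} < 0`, else the sum of `g_{D,-u}`. -/
noncomputable def fUg {V E : Type*} [Fintype E] [DecidableEq V] [DecidableEq E]
    (ends : E → V × V) (Dt : Matrix V E ℝ) (F : Finset E)
    (gD gDm : V → ℝ) (U : Finset V) : ℝ :=
  if ((EUb ends U ∩ F).filter (fun l => dtU Dt U l < 0)).Nonempty then
    ∑ u ∈ U, gD u
  else ∑ u ∈ U, gDm u

/-- `f_{T,g} = ∑_{U ∈ T} R_U f_{U,g}`. -/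
noncomputable def fTg {V E : Type*} [Fintype E] [DecidableEq V] [DecidableEq E]
    (ends : E → V × V) (Dt : Matrix V E ℝ) (F : Finset E)
    (gD gDm : V → ℝ) (Tn Tp : Finset (Finset V)) : ℝ :=
  ∑ U ∈ Tn ∪ Tp, RT ends Dt F Tn Tp U * fUg ends Dt F gD gDm U

/-! Each hyper-node `U ∈ T` contributes `R_U` to the dual potential of its vertices, with sign `+`
on `T_n` and `-` on `T_p`; this potential induces exactly the flow `D̃_{T,l}` on every link `l`.
Condition (ii) makes `D̃_{T,l}` negative on every failed link, so every link outside `F` with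
`D̃_{T,l} < 0` lies in `S_T` and `z_* = f_{T,0}` compensates it, while condition (i) makes the
slacks `|D̃_{T,l}| - z_*` of the failed links nonnegative. The link slacks cost nothing, so the
objective collapses to `f_{T,g} + (η - 1)(|D̃_{T,e}| - f_{T,0})`. -/

section FailCover

variable {V E : Type*} [DecidableEq V] [Fintype E] [DecidableEq E]
  (ends : E → V × V) (Dt : Matrix V E ℝ) (F : Finset E)

def IsFailCover (U : Finset V) : Prop :=
  (EUb ends U ∩ F).Nonempty ∧
    ∀ e ∈ EUb ends U ∩ F, ∀ l ∈ EUb ends U ∩ F, dtU Dt U e * dtU Dt U l > 0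

variable {ends Dt F}

theorem IsFailCover.dtU_ne_zero {U : Finset V} (hU : IsFailCover ends Dt F U) {l : E}
    (hl : l ∈ EUb ends U ∩ F) : dtU Dt U l ≠ 0 := by
  intro h
  simpa [h] using hU.2 l hl l hl

theorem IsFailCover.fU1_pos {U : Finset V} (hU : IsFailCover ends Dt F U) :
    0 < fU1 ends Dt F U := by
  obtain ⟨l, hl, hmin⟩ := ((coe_nonempty.mpr hU.1).image fun e => |dtU Dt U e|).csInf_mem
    ((EUb ends U ∩ F).finite_toSet.image _)
  rw [fU1, ← hmin]
  exact abs_pos.mpr (hU.dtU_ne_zero hl)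

theorem fU1_le_sSup_fU1 (T : Finset (Finset V)) {U : Finset V} (hU : U ∈ T) :
    fU1 ends Dt F U ≤ sSup ((fun U' => fU1 ends Dt F U') '' ↑T) :=
  le_csSup (T.finite_toSet.image _).bddAbove ⟨U, hU, rfl⟩

end FailCover

section Aggregate

variable {V E : Type*} [DecidableEq V] [Fintype E] [DecidableEq E]
  {ends : E → V × V} {Dt : Matrix V E ℝ} {F : Finset E} {Tn Tp : Finset (Finset V)}

theorem RT_pos (hT : ∀ U ∈ Tn ∪ Tp, IsFailCover ends Dt F U) {U : Finset V}
    (hU : U ∈ Tn ∪ Tp) : 0 < RT ends Dt F Tn Tp U :=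
  have hpos := (hT U hU).fU1_pos
  div_pos (hpos.trans_le (fU1_le_sSup_fU1 _ hU)) hpos

theorem dtT_neg (hR : ∀ U ∈ Tn ∪ Tp, 0 < RT ends Dt F Tn Tp U)
    (hTn : ∀ U ∈ Tn, ∀ e ∈ F, dtU Dt U e ≤ 0) (hTp : ∀ U ∈ Tp, ∀ e ∈ F, 0 ≤ dtU Dt U e)
    {l : E} (hl : l ∈ F) {U : Finset V} (hU : U ∈ Tn ∪ Tp) (hUl : dtU Dt U l ≠ 0) :
    dtT ends Dt F Tn Tp l < 0 := by
  have hn : ∀ U ∈ Tn, RT ends Dt F Tn Tp U * dtU Dt U l ≤ 0 := fun U hU =>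
    mul_nonpos_of_nonneg_of_nonpos (hR U (mem_union_left _ hU)).le (hTn U hU l hl)
  have hp : ∀ U ∈ Tp, 0 ≤ RT ends Dt F Tn Tp U * dtU Dt U l := fun U hU =>
    mul_nonneg (hR U (mem_union_right _ hU)).le (hTp U hU l hl)
  rw [dtT]
  rcases mem_union.mp hU with hUn | hUp
  · have := sum_neg' hn ⟨U, hUn, mul_neg_of_pos_of_neg (hR U hU)
      ((hTn U hUn l hl).lt_of_ne hUl)⟩
    linarith [sum_nonneg hp]
  · have := sum_pos' hp ⟨U, hUp, mul_pos (hR U hU) ((hTp U hUp l hl).lt_of_ne' hUl)⟩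
    linarith [sum_nonpos hn]

theorem fT0_nonneg : 0 ≤ fT0 ends Dt F Tn Tp :=
  Real.sSup_nonneg (by rintro _ ⟨_, -, rfl⟩; exact abs_nonneg _)

theorem abs_dtT_le_fT0 {l : E} (hl : l ∈ STset ends Dt F Tn Tp) :
    |dtT ends Dt F Tn Tp l| ≤ fT0 ends Dt F Tn Tp :=
  le_csSup ((Set.toFinite _).image _).bddAbove (Set.mem_image_of_mem _ hl)

theorem fT1_le_abs_dtT {l : E} (hl : l ∈ F) :
    fT1 ends Dt F Tn Tp ≤ |dtT ends Dt F Tn Tp l| :=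
  csInf_le ⟨0, by rintro _ ⟨_, _, rfl⟩; exact abs_nonneg _⟩ ⟨l, hl, rfl⟩

/-- A negative flow on a link outside `F` has the sign of the failed link `e`, so it lies in `S_T`. -/
theorem neg_fT0_le_dtT {e : E} (he : e ∈ F) (hneg : dtT ends Dt F Tn Tp e < 0)
    {l : E} (hl : l ∉ F) : -fT0 ends Dt F Tn Tp ≤ dtT ends Dt F Tn Tp l := by
  rcases le_or_gt 0 (dtT ends Dt F Tn Tp l) with hnn | hlt
  · exact (neg_nonpos.mpr fT0_nonneg).trans hnn
  · have := abs_dtT_le_fT0 ⟨hl, e, he, mul_pos_of_neg_of_neg hlt hneg⟩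
    linarith [neg_abs_le (dtT ends Dt F Tn Tp l)]

theorem fUg_of_nonpos (gD gDm : V → ℝ) {U : Finset V} (hU : IsFailCover ends Dt F U)
    (hsign : ∀ e ∈ F, dtU Dt U e ≤ 0) : fUg ends Dt F gD gDm U = ∑ u ∈ U, gD u := by
  obtain ⟨l, hl⟩ := hU.1
  exact if_pos ⟨l, mem_filter.mpr ⟨hl, (hsign l (mem_inter.mp hl).2).lt_of_ne
    (hU.dtU_ne_zero hl)⟩⟩

theorem fUg_of_nonneg (gD gDm : V → ℝ) {U : Finset V} (hsign : ∀ e ∈ F, 0 ≤ dtU Dt U e) :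
    fUg ends Dt F gD gDm U = ∑ u ∈ U, gDm u := by
  refine if_neg ?_
  rintro ⟨l, hl⟩
  obtain ⟨hlU, hlt⟩ := mem_filter.mp hl
  exact (hsign l (mem_inter.mp hlU).2).not_gt hlt

end Aggregate

section Potential

variable {V : Type*} [DecidableEq V]

/-- With `r = R`, this is `z_{D,v}` of the witness for `S = T_n` and `z_{D,-v}` for `S = T_p`. -/
def coverWeight (S : Finset (Finset V)) (r : Finset V → ℝ) (v : V) : ℝ :=
  ∑ U ∈ S, if v ∈ U then r U else 0

theorem coverWeight_nonneg {S : Finset (Finset V)} {r : Finset V → ℝ}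
    (hr : ∀ U ∈ S, 0 ≤ r U) (v : V) : 0 ≤ coverWeight S r v :=
  sum_nonneg fun U hU => by split_ifs <;> simp [hr U hU]

variable [Fintype V]

theorem sum_mul_coverWeight (S : Finset (Finset V)) (r : Finset V → ℝ) (c : V → ℝ) :
    ∑ u, c u * coverWeight S r u = ∑ U ∈ S, r U * ∑ u ∈ U, c u := by
  simp_rw [coverWeight, mul_sum, mul_ite, mul_zero]
  rw [sum_comm]
  refine sum_congr rfl fun U _ => ?_
  rw [sum_ite_mem, univ_inter]
  exact sum_congr rfl fun u _ => mul_comm _ _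

variable {E : Type*} [Fintype E] [DecidableEq E]
  {ends : E → V × V} {Dt : Matrix V E ℝ} {F : Finset E} {Tn Tp : Finset (Finset V)}

theorem sum_mul_coverWeight_sub (l : E) :
    ∑ u, Dt u l * (coverWeight Tn (RT ends Dt F Tn Tp) u
      - coverWeight Tp (RT ends Dt F Tn Tp) u) = dtT ends Dt F Tn Tp l := by
  simp_rw [mul_sub, sum_sub_distrib, sum_mul_coverWeight]
  rfl

theorem sum_mul_coverWeight_eq_fTg (gD gDm : V → ℝ) (hdisj : Disjoint Tn Tp)
    (hT : ∀ U ∈ Tn ∪ Tp, IsFailCover ends Dt F U)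
    (hTn : ∀ U ∈ Tn, ∀ e ∈ F, dtU Dt U e ≤ 0) (hTp : ∀ U ∈ Tp, ∀ e ∈ F, 0 ≤ dtU Dt U e) :
    ∑ u, (gD u * coverWeight Tn (RT ends Dt F Tn Tp) u
      + gDm u * coverWeight Tp (RT ends Dt F Tn Tp) u) = fTg ends Dt F gD gDm Tn Tp := by
  rw [sum_add_distrib, sum_mul_coverWeight, sum_mul_coverWeight, fTg, sum_union hdisj]
  congr 1 <;> refine sum_congr rfl fun U hU => ?_
  · rw [fUg_of_nonpos gD gDm (hT U (mem_union_left _ hU)) (hTn U hU)]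
  · rw [fUg_of_nonneg gD gDm (hTp U hU)]

end Potential

section LinkSlack

variable {E : Type*} [DecidableEq E] (F : Finset E) (e : E) (d : E → ℝ) (z : ℝ)

/-- `z_{x+,l}` of the witness, with `d = D̃_T` and `z = z_*`. -/
def failedSlack (l : E) : ℝ :=
  if l ∈ F ∧ l ≠ e then |d l| - z else 0

/-- `z_{x-,l}` of the witness, with `d = D̃_T` and `z = z_*`. -/
def healthySlack (l : E) : ℝ :=
  if l ∈ F then 0 else d l + z

variable {F e d z}

theorem failedSlack_nonneg (h : ∀ l ∈ F, z ≤ |d l|) (l : E) : 0 ≤ failedSlack F e d z l := by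
  unfold failedSlack
  split_ifs with hl
  exacts [sub_nonneg.mpr (h l hl.1), le_rfl]

theorem healthySlack_nonneg (h : ∀ l ∉ F, -z ≤ d l) (l : E) : 0 ≤ healthySlack F d z l := by
  unfold healthySlack
  split_ifs with hl
  exacts [le_rfl, neg_le_iff_add_nonneg.mp (h l hl)]

theorem add_failedSlack_sub_healthySlack (he : e ∈ F) (hF : ∀ l ∈ F, d l ≤ 0) (l : E) :
    d l + (failedSlack F e d z l - healthySlack F d z l) + (if l = e then |d e| - z else 0)
      + z = 0 := by
  unfold failedSlack healthySlack
  rcases eq_or_ne l e with rfl | hle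
  · rw [if_neg fun h : l ∈ F ∧ l ≠ l => h.2 rfl, if_pos he, if_pos rfl, abs_of_nonpos (hF l he)]
    ring
  by_cases hl : l ∈ F
  · rw [if_pos ⟨hl, hle⟩, if_pos hl, if_neg hle, abs_of_nonpos (hF l hl)]
    ring
  · rw [if_neg fun h => hl h.1, if_neg hl, if_neg hle]
    ring

theorem failedSlack_mul_add_healthySlack_mul (l : E) :
    failedSlack F e d z l * (1 - if l ∈ F then 1 else 0)
      + healthySlack F d z l * (if l ∈ F then 1 else 0) = 0 := by
  by_cases hl : l ∈ F <;> simp [failedSlack, healthySlack, hl]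

end LinkSlack

theorem stmt12_general {V E : Type*} [Fintype V] [DecidableEq V] [Fintype E] [DecidableEq E]
    (ends : E → V × V) (Dt : Matrix V E ℝ)
    (F : Finset E) (gD gDm : V → ℝ) (η : ℝ)
    (Tn Tp : Finset (Finset V)) (hdisj : Disjoint Tn Tp)
    (hfailcover : ∀ U ∈ Tn ∪ Tp, (EUb ends U ∩ F).Nonempty ∧
      ∀ e ∈ EUb ends U ∩ F, ∀ l ∈ EUb ends U ∩ F, dtU Dt U e * dtU Dt U l > 0)
    (hTn : ∀ U ∈ Tn, ∀ e ∈ F, dtU Dt U e ≤ 0)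
    (hTp : ∀ U ∈ Tp, ∀ e ∈ F, 0 ≤ dtU Dt U e)
    (hcond_i : fT1 ends Dt F Tn Tp ≥ fT0 ends Dt F Tn Tp)
    (hcond_ii : ∀ e ∈ F, ∃ U ∈ Tn ∪ Tp, e ∈ EUb ends U)
    (e : E) (heF : e ∈ F)
    (hcond3 : fTg ends Dt F gD gDm Tn Tp
        + (η - 1) * (|dtT ends Dt F Tn Tp e| - fT0 ends Dt F Tn Tp) < 0) :
    ∃ (zD zDm : V → ℝ) (zxm zxp : E → ℝ) (zw zs : ℝ),
      (∀ u, 0 ≤ zD u) ∧ (∀ u, 0 ≤ zDm u) ∧ (∀ e', 0 ≤ zxm e') ∧ (∀ e', 0 ≤ zxp e') ∧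
      0 ≤ zw ∧ 0 ≤ zs ∧
      (∀ e', (∑ u, Dt u e' * (zD u - zDm u)) + (zxp e' - zxm e')
          + (if e' = e then zw else 0) + zs = 0) ∧
      ((∑ u, (gD u * zD u + gDm u * zDm u))
        + (∑ e', (zxp e' * (1 - (if e' ∈ F then (1 : ℝ) else 0))
            + zxm e' * (if e' ∈ F then (1 : ℝ) else 0)))
        + (η - 1) * zw < 0) := by
  set R := RT ends Dt F Tn Tp
  set dT := dtT ends Dt F Tn Tp
  set f0 := fT0 ends Dt F Tn Tp
  have hR : ∀ U ∈ Tn ∪ Tp, 0 < R U := fun U hU => RT_pos hfailcover hU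
  have hneg : ∀ l ∈ F, dT l < 0 := fun l hl => by
    obtain ⟨U, hU, hlU⟩ := hcond_ii l hl
    exact dtT_neg hR hTn hTp hl hU
      (IsFailCover.dtU_ne_zero (hfailcover U hU) (mem_inter.mpr ⟨hlU, hl⟩))
  have hf0_le : ∀ l ∈ F, f0 ≤ |dT l| := fun l hl => hcond_i.trans (fT1_le_abs_dtT hl)
  refine ⟨coverWeight Tn R, coverWeight Tp R, healthySlack F dT f0, failedSlack F e dT f0,
    |dT e| - f0, f0, coverWeight_nonneg fun U hU => (hR U (mem_union_left _ hU)).le,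
    coverWeight_nonneg fun U hU => (hR U (mem_union_right _ hU)).le,
    healthySlack_nonneg fun l hl => neg_fT0_le_dtT heF (hneg e heF) hl,
    failedSlack_nonneg hf0_le, sub_nonneg.mpr (hf0_le e heF), fT0_nonneg, fun l => ?_, ?_⟩
  · rw [sum_mul_coverWeight_sub]
    exact add_failedSlack_sub_healthySlack heF (fun l hl => (hneg l hl).le) l
  · rw [sum_mul_coverWeight_eq_fTg gD gDm hdisj hfailcover hTn hTp]
    simpa only [failedSlack_mul_add_healthySlack_mul, sum_const_zero, add_zero] using hcond3

/-- Fail-cover set no-miss condition. -/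
theorem stmt12 {V E : Type*} [Fintype V] [DecidableEq V] [Fintype E] [DecidableEq E]
    (ends : E → V × V) (Dt : Matrix V E ℝ)
    (hD0 : ∀ u e, u ≠ (ends e).1 → u ≠ (ends e).2 → Dt u e = 0)
    (hskew : ∀ e, Dt (ends e).1 e = - Dt (ends e).2 e)
    (F : Finset E) (hFne : F.Nonempty) (gD gDm : V → ℝ) (η : ℝ) (hη : 0 < η ∧ η < 1)
    (Tn Tp : Finset (Finset V)) (hdisj : Disjoint Tn Tp)
    (hfailcover : ∀ U ∈ Tn ∪ Tp, (EUb ends U ∩ F).Nonempty ∧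
      ∀ e ∈ EUb ends U ∩ F, ∀ l ∈ EUb ends U ∩ F, dtU Dt U e * dtU Dt U l > 0)
    (hTn : ∀ U ∈ Tn, ∀ e ∈ F, dtU Dt U e ≤ 0)
    (hTp : ∀ U ∈ Tp, ∀ e ∈ F, 0 ≤ dtU Dt U e)
    (hcond_i : fT1 ends Dt F Tn Tp ≥ fT0 ends Dt F Tn Tp)
    (hcond_ii : ∀ e ∈ F, ∃ U ∈ Tn ∪ Tp, e ∈ EUb ends U)
    (e : E) (heF : e ∈ F)
    (hcond3 : fTg ends Dt F gD gDm Tn Tp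
        + (η - 1) * (|dtT ends Dt F Tn Tp e| - fT0 ends Dt F Tn Tp) < 0) :
    ∃ (zD zDm : V → ℝ) (zxm zxp : E → ℝ) (zw zs : ℝ),
      (∀ u, 0 ≤ zD u) ∧ (∀ u, 0 ≤ zDm u) ∧ (∀ e', 0 ≤ zxm e') ∧ (∀ e', 0 ≤ zxp e') ∧
      0 ≤ zw ∧ 0 ≤ zs ∧
      (∀ e', (∑ u, Dt u e' * (zD u - zDm u)) + (zxp e' - zxm e')
          + (if e' = e then zw else 0) + zs = 0) ∧
      ((∑ u, (gD u * zD u + gDm u * zDm u))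
        + (∑ e', (zxp e' * (1 - (if e' ∈ F then (1 : ℝ) else 0))
            + zxm e' * (if e' ∈ F then (1 : ℝ) else 0)))
        + (η - 1) * zw < 0) :=
  stmt12_general ends Dt F gD gDm η Tn Tp hdisj hfailcover hTn hTp hcond_i hcond_ii e heF hcond3
end

section
/- (Acyclic, single-type attacked area, no islanding ⇒ perfect detection witnesses exist) Suppose the attacked area H is acyclic, all buses in H are load buses (p_v ≤ 0 for all v ∈ V_H), the grid remains connected after the attack so Δ* = 0 (hence g_{D,u} = 0 for all u), and every link e = (s,t) ∈ E_H has θ'_s ≠ θ'_t. Then: (a) for every failed link l ∈ F, there exists a hyper-node U constructed by BFS from an endpoint u of l with D̃_{u,l} < 0 such that conditions (1)–(3) of the no-miss hyper-node theorem hold (with f_{U,g} = 0); and (b) for every operational link e ∈ E_H \ F, there exists a hyper-node U satisfying conditions (1)–(3) of the no-false-alarm hyper-node theorem (with f_{U,g} = 0). Consequently, the LP-based algorithm returns exactly F. -/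
open Matrix Finset

/-!
In an acyclic grid every link `l = {u, v}` is a bridge, so the vertices still reachable from
`u` once `l` is removed form a hyper-node `U` with `u ∈ U`, `v ∉ U` and `E_U = {l}`. Then
`D̃_{U,l} = D̃_{u,l} = (θ'_u - θ'_v) / r_l`, whose sign is chosen by taking `u` to be the
endpoint with the smaller or the larger phase angle. With a single boundary link the sign
conditions of both hyper-node theorems are immediate, and `f_{U,g} = 0` because `Δ* = 0`.
-/

namespace PowerGrid

variable {V E : Type*}

def linkGraph (ends : E → V × V) : SimpleGraph V :=
  SimpleGraph.fromRel fun u v => ∃ e, ends e = (u, v)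

theorem linkGraph_adj_ends {ends : E → V × V} (hends : ∀ e, (ends e).1 ≠ (ends e).2) (e : E) :
    (linkGraph ends).Adj (ends e).1 (ends e).2 :=
  (SimpleGraph.fromRel_adj _ _ _).mpr ⟨hends e, Or.inl ⟨e, rfl⟩⟩

theorem sym2_ends_eq {ends : E → V × V} {l : E} {u v : V}
    (huv : ends l = (u, v) ∨ ends l = (v, u)) : s((ends l).1, (ends l).2) = s(u, v) := by
  rcases huv with h | h <;> rw [h]
  exact Sym2.eq_swap

theorem linkGraph_sdiff_adj_ends {ends : E → V × V} (hends : ∀ e, (ends e).1 ≠ (ends e).2)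
    (hinj : ∀ e₁ e₂, (ends e₁ = ends e₂ ∨ ends e₁ = ((ends e₂).2, (ends e₂).1)) → e₁ = e₂)
    {l e : E} (hel : e ≠ l) {u v : V} (huv : ends l = (u, v) ∨ ends l = (v, u)) :
    (linkGraph ends \ SimpleGraph.fromEdgeSet {s(u, v)}).Adj (ends e).1 (ends e).2 := by
  rw [SimpleGraph.sdiff_adj, SimpleGraph.fromEdgeSet_adj, Set.mem_singleton_iff,
    ← sym2_ends_eq huv, Sym2.eq_iff]
  refine ⟨linkGraph_adj_ends hends e, fun ⟨hmem, _⟩ => hel (hinj e l ?_)⟩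
  rcases hmem with ⟨h₁, h₂⟩ | ⟨h₁, h₂⟩
  · exact Or.inl (Prod.ext h₁ h₂)
  · exact Or.inr (Prod.ext h₁ h₂)

theorem not_reachable_linkGraph_sdiff {ends : E → V × V} (hends : ∀ e, (ends e).1 ≠ (ends e).2)
    (hacyc : (linkGraph ends).IsAcyclic) {l : E} {u v : V}
    (huv : ends l = (u, v) ∨ ends l = (v, u)) :
    ¬ (linkGraph ends \ SimpleGraph.fromEdgeSet {s(u, v)}).Reachable u v := by
  have hedge : s(u, v) ∈ (linkGraph ends).edgeSet := by
    rw [← sym2_ends_eq huv]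
    exact linkGraph_adj_ends hends l
  exact SimpleGraph.isBridge_iff.mp (SimpleGraph.isAcyclic_iff_forall_isBridge.mp hacyc hedge)

theorem exists_finset_mem_iff_reachable (H : SimpleGraph V) (u : V)
    (S : Finset V) : ∃ U : Finset V, u ∈ U ∧ ∀ w ∈ S, (w ∈ U ↔ H.Reachable u w) := by
  classical
  refine ⟨insert u (S.filter (H.Reachable u)), mem_insert_self u _, fun w hw => ?_⟩
  simp only [mem_insert, mem_filter, hw, true_and]
  refine ⟨?_, Or.inr⟩
  rintro (rfl | h)
  exacts [SimpleGraph.Reachable.refl w, h]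

theorem EUb_eq_singleton [Fintype E] [DecidableEq V] {ends : E → V × V} {U : Finset V} {l : E}
    {u v : V} (huv : ends l = (u, v) ∨ ends l = (v, u)) (hu : u ∈ U) (hv : v ∉ U)
    (hclosed : ∀ e, e ≠ l → ((ends e).1 ∈ U ↔ (ends e).2 ∈ U)) :
    EUb ends U = {l} := by
  ext e
  simp only [EUb, mem_filter, mem_univ, true_and, mem_singleton]
  by_cases hel : e = l
  · subst hel
    rcases huv with h | h <;> simp [h, hu, hv]
  · simp only [hel, iff_false, hclosed e hel]
    tauto

theorem exists_EUb_eq_singleton [Fintype E] [DecidableEq V] {ends : E → V × V}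
    (hends : ∀ e, (ends e).1 ≠ (ends e).2)
    (hinj : ∀ e₁ e₂, (ends e₁ = ends e₂ ∨ ends e₁ = ((ends e₂).2, (ends e₂).1)) → e₁ = e₂)
    (hacyc : (linkGraph ends).IsAcyclic) {l : E} {u v : V}
    (huv : ends l = (u, v) ∨ ends l = (v, u)) :
    ∃ U : Finset V, u ∈ U ∧ v ∉ U ∧ EUb ends U = {l} := by
  set H := linkGraph ends \ SimpleGraph.fromEdgeSet {s(u, v)}
  -- `EUb` only sees link endpoints, so `U` need only agree with the component of `u` on them.
  obtain ⟨U, hu, hU⟩ := exists_finset_mem_iff_reachable H u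
    (univ.biUnion fun e => {(ends e).1, (ends e).2})
  have hendpoint (e : E) (w : V) (hw : w ∈ ({(ends e).1, (ends e).2} : Finset V)) :
      w ∈ U ↔ H.Reachable u w :=
    hU w (mem_biUnion.mpr ⟨e, mem_univ e, hw⟩)
  have hv : v ∉ U := by
    rw [hendpoint l v (by rcases huv with h | h <;> simp [h])]
    exact not_reachable_linkGraph_sdiff hends hacyc huv
  refine ⟨U, hu, hv, EUb_eq_singleton huv hu hv fun e hel => ?_⟩
  have hadj := linkGraph_sdiff_adj_ends hends hinj hel huv
  rw [hendpoint e _ (by simp), hendpoint e _ (by simp)]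
  exact ⟨fun h => h.trans hadj.reachable, fun h => h.trans hadj.symm.reachable⟩

theorem dtU_eq_of_mem_of_notMem {ends : E → V × V} {r : E → ℝ} {θ' : V → ℝ}
    {Dt : Matrix V E ℝ} [DecidableEq V]
    (hDt : ∀ u e, Dt u e =
      if u = (ends e).1 then (θ' u - θ' (ends e).2) / r e
      else if u = (ends e).2 then (θ' u - θ' (ends e).1) / r e else 0)
    {U : Finset V} {l : E} {u v : V} (huv : ends l = (u, v) ∨ ends l = (v, u))
    (hu : u ∈ U) (hv : v ∉ U) :
    dtU Dt U l = (θ' u - θ' v) / r l := by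
  have hne : u ≠ v := fun h => hv (h ▸ hu)
  rw [dtU, sum_eq_single_of_mem u hu]
  · rcases huv with h | h <;> simp [hDt, h, hne]
  · intro w hw hwu
    have hwv : w ≠ v := fun h => hv (h ▸ hw)
    rcases huv with h | h <;> simp [hDt, h, hwu, hwv]

theorem exists_endpoints_lt {ends : E → V × V} {θ' : V → ℝ}
    (hnd : ∀ e, θ' (ends e).1 ≠ θ' (ends e).2) (l : E) :
    ∃ u v, (ends l = (u, v) ∨ ends l = (v, u)) ∧ θ' u < θ' v := by
  rcases (hnd l).lt_or_gt with h | h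
  · exact ⟨_, _, Or.inl rfl, h⟩
  · exact ⟨_, _, Or.inr rfl, h⟩

end PowerGrid

open PowerGrid

theorem stmt15_general {V E : Type*} [DecidableEq V] [Fintype E] [DecidableEq E]
    (ends : E → V × V) (hends : ∀ e, (ends e).1 ≠ (ends e).2)
    (hinj : ∀ e₁ e₂, (ends e₁ = ends e₂ ∨ ends e₁ = ((ends e₂).2, (ends e₂).1)) → e₁ = e₂)
    (hacyc : (SimpleGraph.fromRel (fun u v => ∃ e, ends e = (u, v))).IsAcyclic)
    (r : E → ℝ) (hr : ∀ e, 0 < r e) (θ' : V → ℝ)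
    (hnd : ∀ e, θ' (ends e).1 ≠ θ' (ends e).2)
    (Dt : Matrix V E ℝ)
    (hDt : ∀ u e, Dt u e =
      if u = (ends e).1 then (θ' u - θ' (ends e).2) / r e
      else if u = (ends e).2 then (θ' u - θ' (ends e).1) / r e else 0)
    (Δstar : V → ℝ) (hΔ : ∀ v, Δstar v = 0)
    (gD gDm : V → ℝ) (hgD : ∀ u, gD u = -Δstar u)
    (F : Finset E) (η : ℝ) (hη : 0 < η ∧ η < 1) :
    (∀ l ∈ F, ∃ U : Finset V, l ∈ EUb ends U ∧
      (∀ e ∈ EUb ends U ∩ F, ∀ l' ∈ EUb ends U ∩ F,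
        dtU Dt U e * dtU Dt U l' > 0) ∧
      (∀ e ∈ EUb ends U, e ∉ F → ∀ l' ∈ EUb ends U ∩ F,
        ¬ (dtU Dt U l' * dtU Dt U e > 0)) ∧
      ((if dtU Dt U l < 0 then ∑ u ∈ U, gD u else ∑ u ∈ U, gDm u)
        + (η - 1) * |dtU Dt U l| < 0)) ∧
    (∀ e, e ∉ F → ∃ U : Finset V, e ∈ EUb ends U ∧
      (∀ l₁ ∈ EUb ends U, l₁ ∉ F → ∀ l₂ ∈ EUb ends U, l₂ ∉ F →
        dtU Dt U l₁ * dtU Dt U l₂ > 0) ∧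
      ((EUb ends U ∩ F).Nonempty →
        ∀ e' ∈ EUb ends U, e' ∉ F → ∀ l' ∈ EUb ends U ∩ F,
          ¬ (dtU Dt U l' * dtU Dt U e' > 0)) ∧
      ((if dtU Dt U e > 0 then ∑ u ∈ U, gD u else ∑ u ∈ U, gDm u)
        - η * |dtU Dt U e| < 0)) := by
  have hgD0 (U : Finset V) : ∑ u ∈ U, gD u = 0 := by simp [hgD, hΔ]
  refine ⟨fun l hl => ?_, fun e he => ?_⟩
  · obtain ⟨u, v, huv, hlt⟩ := exists_endpoints_lt hnd l
    obtain ⟨U, hu, hv, hEU⟩ := exists_EUb_eq_singleton hends hinj hacyc huv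
    have hneg : dtU Dt U l < 0 := by
      rw [dtU_eq_of_mem_of_notMem hDt huv hu hv]
      exact div_neg_of_neg_of_pos (sub_neg.mpr hlt) (hr l)
    refine ⟨U, hEU ▸ mem_singleton_self l, ?_, ?_, ?_⟩
    · simp only [hEU, mem_inter, mem_singleton]
      rintro _ ⟨rfl, -⟩ _ ⟨rfl, -⟩
      exact mul_pos_of_neg_of_neg hneg hneg
    · simp only [hEU, mem_singleton]
      rintro _ rfl hlF
      exact absurd hl hlF
    · rw [if_pos hneg, hgD0, zero_add]
      exact mul_neg_of_neg_of_pos (by linarith [hη.2]) (abs_pos.mpr hneg.ne)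
  · obtain ⟨u, v, huv, hlt⟩ := exists_endpoints_lt hnd e
    have hvu : ends e = (v, u) ∨ ends e = (u, v) := huv.symm
    obtain ⟨U, hv, hu, hEU⟩ := exists_EUb_eq_singleton hends hinj hacyc hvu
    have hpos : 0 < dtU Dt U e := by
      rw [dtU_eq_of_mem_of_notMem hDt hvu hv hu]
      exact div_pos (sub_pos.mpr hlt) (hr e)
    refine ⟨U, hEU ▸ mem_singleton_self e, ?_, ?_, ?_⟩
    · simp only [hEU, mem_singleton]
      rintro _ rfl - _ rfl -
      exact mul_pos hpos hpos
    · rintro ⟨l', hl'⟩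
      simp only [hEU, mem_inter, mem_singleton] at hl'
      exact absurd (hl'.1 ▸ hl'.2) he
    · rw [if_pos hpos, hgD0, zero_sub, neg_lt_zero]
      exact mul_pos hη.1 (abs_pos.mpr hpos.ne')

/-- If the attacked area `H` is acyclic, has no parallel edges, all its buses are load
buses, the grid stays connected after attack (`Δ* = 0`), and every link carries a
nonzero (hypothetical) flow, then for every failed link there is a hyper-node
satisfying the no-miss conditions (with `f_{U,g} = 0`), and for every operational link
there is a hyper-node satisfying the no-false-alarm conditions; hence the LP-based
algorithm returns exactly `F`. -/
theorem stmt15 {V E : Type*} [Fintype V] [DecidableEq V] [Fintype E] [DecidableEq E]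
    (ends : E → V × V) (hends : ∀ e, (ends e).1 ≠ (ends e).2)
    (hinj : ∀ e₁ e₂, (ends e₁ = ends e₂ ∨ ends e₁ = ((ends e₂).2, (ends e₂).1)) → e₁ = e₂)
    (hacyc : (SimpleGraph.fromRel (fun u v => ∃ e, ends e = (u, v))).IsAcyclic)
    (r : E → ℝ) (hr : ∀ e, 0 < r e) (θ' : V → ℝ)
    (hnd : ∀ e, θ' (ends e).1 ≠ θ' (ends e).2)
    (Dt : Matrix V E ℝ)
    (hDt : ∀ u e, Dt u e =
      if u = (ends e).1 then (θ' u - θ' (ends e).2) / r e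
      else if u = (ends e).2 then (θ' u - θ' (ends e).1) / r e else 0)
    (p Δstar : V → ℝ) (hload : ∀ v, p v ≤ 0) (hΔ : ∀ v, Δstar v = 0)
    (gD gDm : V → ℝ) (hgD : ∀ u, gD u = -Δstar u)
    (hgDm : ∀ u, gDm u = -(p u - Δstar u))
    (F : Finset E) (η : ℝ) (hη : 0 < η ∧ η < 1) :
    (∀ l ∈ F, ∃ U : Finset V, l ∈ EUb ends U ∧
      (∀ e ∈ EUb ends U ∩ F, ∀ l' ∈ EUb ends U ∩ F,
        dtU Dt U e * dtU Dt U l' > 0) ∧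
      (∀ e ∈ EUb ends U, e ∉ F → ∀ l' ∈ EUb ends U ∩ F,
        ¬ (dtU Dt U l' * dtU Dt U e > 0)) ∧
      ((if dtU Dt U l < 0 then ∑ u ∈ U, gD u else ∑ u ∈ U, gDm u)
        + (η - 1) * |dtU Dt U l| < 0)) ∧
    (∀ e, e ∉ F → ∃ U : Finset V, e ∈ EUb ends U ∧
      (∀ l₁ ∈ EUb ends U, l₁ ∉ F → ∀ l₂ ∈ EUb ends U, l₂ ∉ F →
        dtU Dt U l₁ * dtU Dt U l₂ > 0) ∧
      ((EUb ends U ∩ F).Nonempty →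
        ∀ e' ∈ EUb ends U, e' ∉ F → ∀ l' ∈ EUb ends U ∩ F,
          ¬ (dtU Dt U l' * dtU Dt U e' > 0)) ∧
      ((if dtU Dt U e > 0 then ∑ u ∈ U, gD u else ∑ u ∈ U, gDm u)
        - η * |dtU Dt U e| < 0)) :=
  stmt15_general ends hends hinj hacyc r hr θ' hnd Dt hDt Δstar hΔ gD gDm hgD F η hη
end
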